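/- Let G be a profinite group, A a discrete abelian group, m ≥ 0, and N an open normal subgroup of G. Give Map_c(G^{m+1}, A) the G-action (g · f)(g_1, ..., g_{m+1}) = f(g_1 g, g_2, ..., g_{m+1}). Then the N-fixed points satisfy a natural isomorphism of abelian groups Map_c(G^{m+1}, A)^N ≅ ∏_{G/N} Map_c(G^m, A), a product of copies of Map_c(G^m, A) indexed by the finite set G/N. -/

import Mathlib

open scoped Pointwise

variable (G : Type*) [Group G] [TopologicalSpace G] [IsTopologicalGroup G]
  [CompactSpace G] [T2Space G] [TotallyDisconnectedSpace G]
  (A : Type*) [AddCommGroup A] [TopologicalSpace A] [DiscreteTopology A]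
  [IsTopologicalAddGroup A]

/-- The `N`-fixed points of `Map_c(G^{m+1}, A)` under the action
`(g · f)(g₁, …, g_{m+1}) = f(g₁g, g₂, …, g_{m+1})`, as an additive subgroup.
Here `G^{m+1}` is modeled as `G × (Fin m → G)`. -/
def fixedMaps (m : ℕ) (N : Subgroup G) : AddSubgroup C(G × (Fin m → G), A) where
  carrier := {f | ∀ n ∈ N, ∀ x : G × (Fin m → G), f (x.1 * n, x.2) = f x}
  add_mem' := by
    intro a b ha hb n hn x
    simp [ha n hn x, hb n hn x]
  zero_mem' := by
    intro n hn x
    simp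
  neg_mem' := by
    intro a ha n hn x
    simp [ha n hn x]

/-
A map on `G × X` that is invariant under right translation by `N` in the first coordinate is
the same as a continuous map on `(G ⧸ N) × X`, because `G → G ⧸ N` is an open quotient map and so
is its product with `id`. When `N` is open, `G ⧸ N` is discrete, so a continuous map on
`(G ⧸ N) × X` is just a family, indexed by `G ⧸ N`, of continuous maps on `X`.
-/

open Topology

namespace ContinuousMap

variable {D X Y : Type*} [TopologicalSpace D] [DiscreteTopology D] [TopologicalSpace X]
  [TopologicalSpace Y]

def curryEquivOfDiscrete : C(D × X, Y) ≃ (D → C(X, Y)) where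
  toFun F := F.curry
  invFun F := ⟨fun p => F p.1 p.2, continuous_prod_of_discrete_left.mpr fun d => (F d).continuous⟩
  left_inv _ := rfl
  right_inv _ := rfl

end ContinuousMap

namespace QuotientGroup

variable {G : Type*} [Group G] [TopologicalSpace G] (N : Subgroup G)
  {X : Type*} [TopologicalSpace X]

variable (X) in
def prodMapMk : C(G × X, (G ⧸ N) × X) :=
  (ContinuousMap.mk ((↑) : G → G ⧸ N) continuous_mk).prodMap (.id X)

theorem factorsThrough_prodMapMk_iff {Y : Type*} {f : G × X → Y} :
    Function.FactorsThrough f (prodMapMk N X) ↔ ∀ n ∈ N, ∀ p : G × X, f (p.1 * n, p.2) = f p := by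
  constructor
  · intro hf n hn p
    exact hf (Prod.ext (mk_mul_of_mem p.1 hn) rfl)
  · rintro hf ⟨g, x⟩ ⟨g', x'⟩ hgg'
    obtain ⟨hg, rfl : x = x'⟩ := Prod.ext_iff.mp hgg'
    obtain ⟨n, rfl⟩ : ∃ n : N, g' = g * n :=
      ⟨⟨g⁻¹ * g', leftRel_apply.mp (Quotient.exact' hg)⟩, by simp⟩
    exact (hf n n.2 (g, x)).symm

variable [SeparatelyContinuousMul G] {Y : Type*} [TopologicalSpace Y]

theorem isQuotientMap_prodMapMk : IsQuotientMap (prodMapMk N X) :=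
  (isOpenQuotientMap_mk.prodMap IsOpenQuotientMap.id).isQuotientMap

noncomputable def rightInvariantMapsEquiv :
    {f : C(G × X, Y) // ∀ n ∈ N, ∀ p : G × X, f (p.1 * n, p.2) = f p} ≃ C((G ⧸ N) × X, Y) :=
  (Equiv.subtypeEquivRight fun _ => (factorsThrough_prodMapMk_iff N).symm).trans
    (isQuotientMap_prodMapMk N).liftEquiv

@[simp]
theorem rightInvariantMapsEquiv_apply_mk
    (f : {f : C(G × X, Y) // ∀ n ∈ N, ∀ p : G × X, f (p.1 * n, p.2) = f p}) (g : G) (x : X) :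
    rightInvariantMapsEquiv N f (g, x) = f.1 (g, x) :=
  DFunLike.congr_fun ((isQuotientMap_prodMapMk N).lift_comp f.1
    ((factorsThrough_prodMapMk_iff N).mpr f.2)) (g, x)

end QuotientGroup

theorem stmt5 (m : ℕ) (N : Subgroup G) (hNo : IsOpen (N : Set G)) :
    Nonempty ((fixedMaps G A m N) ≃+ ((G ⧸ N) → C((Fin m → G), A))) := by
  have : DiscreteTopology (G ⧸ N) := QuotientGroup.discreteTopology hNo
  let e : fixedMaps G A m N ≃ ((G ⧸ N) → C((Fin m → G), A)) :=
    (QuotientGroup.rightInvariantMapsEquiv N).trans ContinuousMap.curryEquivOfDiscrete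
  have he (f : fixedMaps G A m N) (g : G) (x : Fin m → G) : e f g x = f.1 (g, x) :=
    QuotientGroup.rightInvariantMapsEquiv_apply_mk N f g x
  refine ⟨AddEquiv.mk' e fun f f' => ?_⟩
  ext q x
  induction q using QuotientGroup.induction_on with | H g => ?_
  rw [Pi.add_apply, ContinuousMap.add_apply, he, he, he]
  rfl
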